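/- Let G be a moral DAG (a DAG with no v-structures) with covered edge x→y, and let G' be the DAG obtained from G by reversing x→y to y→x. Suppose a is a vertex with a ∉ {x,y} such that x is a direct child of a in G (a→x is an edge of G and there is no directed path in G from a to x of length at least 2). Then a→x is a covered edge of G if and only if a→y is a covered edge of G'. (Note that a→y is indeed an edge of G and of G', since x→y covered in G and a→x ∈ E(G) imply a ∈ Pa_G(y).) -/

import Mathlib

/-- A directed graph (given by its edge relation) is a DAG if it has no directed cycles. -/
def IsDAG {V : Type*} (E : V → V → Prop) : Prop :=
  ∀ v : V, ¬ Relation.TransGen E v v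

/-- The set of parents of `v` in the directed graph `E`. -/
def parents {V : Type*} (E : V → V → Prop) (v : V) : Set V := {u | E u v}

/-- An arc `x → y` of `E` is a covered edge if `Pa(x) = Pa(y) \ {x}`. -/
def CoveredEdge {V : Type*} (E : V → V → Prop) (x y : V) : Prop :=
  E x y ∧ parents E x = parents E y \ {x}

/-- The set of covered edges of `E`, as ordered pairs. -/
def coveredEdges {V : Type*} (E : V → V → Prop) : Set (V × V) :=
  {p | CoveredEdge E p.1 p.2}

/-- The skeleton (undirected adjacency) of a directed graph. -/
def Skel {V : Type*} (E : V → V → Prop) (u v : V) : Prop := E u v ∨ E v u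

/-- `(u, v, w)` is a v-structure: `u → v ← w` with `u ≠ w` non-adjacent. -/
def VStruct {V : Type*} (E : V → V → Prop) (u v w : V) : Prop :=
  u ≠ w ∧ E u v ∧ E w v ∧ ¬ Skel E u w

/-- Two directed graphs are Markov equivalent: same skeleton and same v-structures. -/
def MarkovEquiv {V : Type*} (E E' : V → V → Prop) : Prop :=
  (∀ u v, Skel E u v ↔ Skel E' u v) ∧ (∀ u v w, VStruct E u v w ↔ VStruct E' u v w)

/-- Minimum vertex cover number of a set of (directed) edges. -/
noncomputable def mvc {V : Type*} [Fintype V] (F : Set (V × V)) : ℕ :=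
  sInf {n | ∃ S : Finset V, (∀ p ∈ F, p.1 ∈ S ∨ p.2 ∈ S) ∧ S.card = n}

/-- The graph obtained from `E` by reversing the arc `x → y` to `y → x`. -/
def reverseEdge {V : Type*} (E : V → V → Prop) (x y : V) : V → V → Prop :=
  fun u v => (E u v ∧ ¬(u = x ∧ v = y)) ∨ (u = y ∧ v = x)

/-- A moral DAG is a DAG with no v-structures. -/
def Moral {V : Type*} (E : V → V → Prop) : Prop := ∀ u v w, ¬ VStruct E u v w

/-- `w` is a direct child of `v`: `v → w` is an arc and there is no directed
path from `v` to `w` of length at least 2 (i.e. through an intermediate vertex). -/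
def DirectChild {V : Type*} (E : V → V → Prop) (v w : V) : Prop :=
  E v w ∧ ∀ z : V, ¬ (Relation.TransGen E v z ∧ Relation.TransGen E z w)

/-!
Reversing the covered edge `x → y` leaves the parents of every vertex other than `x` and `y`
unchanged and gives `y` the parent set `Pa(y) \ {x} = Pa(x)`. So in the reversed graph the pair
`(a, y)` has exactly the parent sets that `(a, x)` had before, and `a → y` is an arc on both
sides since `a ∈ Pa(x) ⊆ Pa(y)`.
-/

namespace CoveredEdge

variable {V : Type*} {E : V → V → Prop} {x y : V}

theorem ne (h : CoveredEdge E x y) : x ≠ y := by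
  rintro rfl
  have hx : x ∈ parents E x := h.1
  rw [h.2] at hx
  exact hx.2 rfl

theorem parent_right {u : V} (h : CoveredEdge E x y) (hu : E u x) : E u y := by
  have hu' : u ∈ parents E x := hu
  rw [h.2] at hu'
  exact hu'.1

end CoveredEdge

section reverseEdge

variable {V : Type*} (E : V → V → Prop) {x y : V}

theorem reverseEdge_iff_of_left_ne {u v : V} (hx : u ≠ x) (hy : u ≠ y) :
    reverseEdge E x y u v ↔ E u v := by
  simp [reverseEdge, hx, hy]

theorem parents_reverseEdge_of_ne {v : V} (hx : v ≠ x) (hy : v ≠ y) :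
    parents (reverseEdge E x y) v = parents E v := by
  ext u
  simp [parents, reverseEdge, hx, hy]

theorem parents_reverseEdge_right (hxy : x ≠ y) :
    parents (reverseEdge E x y) y = parents E y \ {x} := by
  ext u
  simp [parents, reverseEdge, hxy.symm]

theorem CoveredEdge.parents_reverseEdge (h : CoveredEdge E x y) :
    parents (reverseEdge E x y) y = parents E x := by
  rw [parents_reverseEdge_right E h.ne, h.2]

end reverseEdge

theorem coveredEdge_reverse_parent_case_general
    {V : Type*} (E : V → V → Prop) (x y a : V)
    (hxy : CoveredEdge E x y)
    (hax : a ≠ x) (hay : a ≠ y) (hchild : DirectChild E a x) :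
    CoveredEdge E a x ↔ CoveredEdge (reverseEdge E x y) a y := by
  have hx : E a x := hchild.1
  unfold CoveredEdge
  rw [reverseEdge_iff_of_left_ne E hax hay, parents_reverseEdge_of_ne E hax hay,
    hxy.parents_reverseEdge]
  exact and_congr_left fun _ => iff_of_true hx (hxy.parent_right hx)

/-- In a moral DAG with covered edge `x → y`, if `a ∉ {x, y}` and `x` is a direct child
of `a`, then `a → x` is a covered edge of the DAG if and only if `a → y` is a covered
edge of the DAG obtained by reversing `x → y`. -/
theorem coveredEdge_reverse_parent_case
    {V : Type*} (E : V → V → Prop) (x y a : V)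
    (hE : IsDAG E) (hm : Moral E) (hxy : CoveredEdge E x y)
    (hax : a ≠ x) (hay : a ≠ y) (hchild : DirectChild E a x) :
    CoveredEdge E a x ↔ CoveredEdge (reverseEdge E x y) a y :=
  coveredEdge_reverse_parent_case_general E x y a hxy hax hay hchild
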